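/- Let G be a finite connected undirected graph with positive conductances and marked vertex b, and let e be an edge of G. Under the probability measure P on two-component spanning forests proportional to weight, the probability that e connects the floating component Σ to its complement (i.e., e has exactly one endpoint in Σ) equals κ(G)·T(e,e)/(c(e)·κ₂(G)), where T is the transfer current. Equivalently, the weighted sum of 2SFs for which e joins the two components equals κ(G)·T(e,e)/c(e), which is the weighted sum of spanning trees containing e. -/

import Mathlib

open scoped Classical BigOperators

noncomputable section

namespace TwoSF

variable {V : Type*} [Fintype V] [DecidableEq V]

/-- `u` and `v` are linked by the edges in `B`. -/
def Linked (B : Finset (Sym2 V)) : V → V → Prop :=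
  Relation.ReflTransGen fun a b => s(a, b) ∈ B

/-- The number of connected components of the spanning subgraph `(V, B)`. -/
def ncomp (B : Finset (Sym2 V)) : ℕ :=
  Nat.card (Quot (Linked B))

/-- `B` is a spanning forest of the complete graph on `V` with exactly `k`
connected components: it has `k` components and, by the rank count
`|B| + k = |V|`, it is acyclic (in particular it contains no loop edge).
Taking `k = 1` gives spanning trees, `k = 2` gives two-component spanning
forests (2SF). -/
def IsSF (k : ℕ) (B : Finset (Sym2 V)) : Prop :=
  ncomp B = k ∧ B.card + k = Fintype.card V

/-- The weight of an edge set: the product of its conductances. -/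
def wt (c : Sym2 V → ℝ) (B : Finset (Sym2 V)) : ℝ := ∏ e ∈ B, c e

/-- κ: the weighted sum of spanning trees.  Edge sets containing a non-edge
(an `e` with `c e = 0`) contribute weight `0`, so this is the weighted number
of spanning trees of the graph whose edges are the support of `c`. -/
def kappa1 (c : Sym2 V → ℝ) : ℝ := ∑ B ∈ Finset.univ.filter (IsSF 1), wt c B

/-- κ₂: the weighted sum of two-component spanning forests. -/
def kappa2 (c : Sym2 V → ℝ) : ℝ := ∑ B ∈ Finset.univ.filter (IsSF 2), wt c B

/-- The floating component of `B`: the set of vertices not linked to `b`. -/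
def floating (b : V) (B : Finset (Sym2 V)) : Finset V :=
  Finset.univ.filter fun v => ¬ Linked B b v

/-- The graph Laplacian `Δ` of the graph with conductances `c`. -/
def lap (c : Sym2 V → ℝ) : Matrix V V ℝ := fun u v =>
  if u = v then ∑ w ∈ Finset.univ.filter (· ≠ u), c s(u, w) else -c s(u, v)

/-- The Dirichlet Laplacian `Δ_D`, indexed by `V \ {b}`. -/
def dlap (c : Sym2 V → ℝ) (b : V) : Matrix {w : V // w ≠ b} {w : V // w ≠ b} ℝ :=
  Matrix.of fun p q => lap c p.1 q.1

/-- The Green function with Dirichlet boundary condition at `b` (the inverse of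
the Dirichlet Laplacian), with the convention that it vanishes as soon as one
of its arguments is `b`. -/
def green (c : Sym2 V → ℝ) (b : V) (u v : V) : ℝ :=
  if hu : u = b then 0 else if hv : v = b then 0 else (dlap c b)⁻¹ ⟨u, hu⟩ ⟨v, hv⟩

/-- The probability of the event `p` under the probability measure on
two-component spanning forests assigning to each 2SF a probability
proportional to its weight. -/
def pr2 (c : Sym2 V → ℝ) (p : Finset (Sym2 V) → Prop) : ℝ :=
  (∑ B ∈ Finset.univ.filter (fun B => IsSF 2 B ∧ p B), wt c B) / kappa2 c

/-- The expectation of `((floating b B).card : ℝ) ^ k`, i.e. of `|Σ|^k`, under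
the probability measure on two-component spanning forests proportional to
weight. -/
def expPow (c : Sym2 V → ℝ) (b : V) (k : ℕ) : ℝ :=
  (∑ B ∈ Finset.univ.filter (IsSF 2), wt c B * ((floating b B).card : ℝ) ^ k) / kappa2 c

/-- `|∂Σ|`: the sum of the conductances of the edges having exactly one
endpoint in the floating component of `B`. -/
def bdryWt (c : Sym2 V → ℝ) (b : V) (B : Finset (Sym2 V)) : ℝ :=
  ∑ u ∈ floating b B, ∑ v ∈ (floating b B)ᶜ, c s(u, v)

/-- The expectation of `|∂Σ|` under the probability measure on two-component
spanning forests proportional to weight. -/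
def expBdry (c : Sym2 V → ℝ) (b : V) : ℝ :=
  (∑ B ∈ Finset.univ.filter (IsSF 2), wt c B * bdryWt c b B) / kappa2 c

end TwoSF

/-!
Adding the edge `e = xy` to a two-component spanning forest whose components separate `x` and `y`
gives a spanning tree containing `e`, and every such tree arises exactly once, so the numerator of
the probability is `∑_{T ∋ e} wt(T \ e)`. Writing `Δ_D = M diag(c) Mᵀ` with `M` the signed
incidence matrix with the row of `b` deleted, Cauchy–Binet and the fact that the maximal minors of
`M` are `±1` on spanning trees and `0` otherwise give the matrix-tree theorem `det Δ_D = κ`.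
Raising `c(e)` by `1` adds `∑_{T ∋ e} wt(T \ e)` to `κ` and the rank-one matrix `χχᵀ`,
`χ = δ_x - δ_y`, to `Δ_D`; by the matrix determinant lemma the new determinant is
`κ (1 + χᵀ G χ)`, hence `∑_{T ∋ e} wt(T \ e) = κ (G_xx - 2 G_xy + G_yy) = κ T(e,e) / c(e)`.
-/

namespace TwoSF

open Finset

variable {V : Type*}

section Linked

variable {B B' : Finset (Sym2 V)} {a u v w : V}

theorem linked_of_mem (h : s(u, v) ∈ B) : Linked B u v := .single h

theorem Linked.symm (h : Linked B u v) : Linked B v u := by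
  induction h with
  | refl => exact .refl
  | tail _ hst ih => exact .head (Sym2.eq_swap ▸ hst) ih

theorem Linked.trans (h : Linked B u v) (h' : Linked B v w) : Linked B u w :=
  Relation.ReflTransGen.trans h h'

theorem linked_equivalence (B : Finset (Sym2 V)) : Equivalence (Linked B) :=
  ⟨fun _ => .refl, Linked.symm, Linked.trans⟩

theorem Linked.mono (hBB' : B ⊆ B') (h : Linked B u v) : Linked B' u v :=
  Relation.ReflTransGen.mono (fun _ _ h => hBB' h) _ _ h

theorem linked_insert_iff [DecidableEq V] :
    Linked (insert s(u, v) B) a w ↔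
      Linked B a w ∨ (Linked B a u ∧ Linked B v w) ∨ (Linked B a v ∧ Linked B u w) := by
  constructor
  · intro h
    induction h with
    | refl => exact .inl .refl
    | tail _ hst ih =>
      rcases mem_insert.1 hst with he | hB
      · rcases Sym2.eq_iff.1 he with ⟨rfl, rfl⟩ | ⟨rfl, rfl⟩ <;>
          rcases ih with h | ⟨h, -⟩ | ⟨h, -⟩ <;> tauto
      · rcases ih with h | ⟨h₁, h₂⟩ | ⟨h₁, h₂⟩
        exacts [.inl (h.tail hB), .inr (.inl ⟨h₁, h₂.tail hB⟩), .inr (.inr ⟨h₁, h₂.tail hB⟩)]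
  · have mono {p q : V} : Linked B p q → Linked (insert s(u, v) B) p q :=
      Linked.mono (subset_insert _ _)
    have huv : Linked (insert s(u, v) B) u v := linked_of_mem (mem_insert_self _ _)
    rintro (h | ⟨h₁, h₂⟩ | ⟨h₁, h₂⟩)
    exacts [mono h, (mono h₁).trans (huv.trans (mono h₂)),
      (mono h₁).trans (huv.symm.trans (mono h₂))]

theorem linked_insert_of_linked [DecidableEq V] (h : Linked B u v) :
    Linked (insert s(u, v) B) = Linked B := by
  ext a w
  rw [linked_insert_iff]
  constructor
  · rintro (h' | ⟨h₁, h₂⟩ | ⟨h₁, h₂⟩)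
    exacts [h', h₁.trans (h.trans h₂), h₁.trans (h.symm.trans h₂)]
  · exact .inl

theorem linked_empty : Linked (∅ : Finset (Sym2 V)) = Eq := by
  ext u v
  constructor
  · intro h
    induction h with
    | refl => rfl
    | tail _ hst => exact absurd hst (notMem_empty _)
  · rintro rfl
    exact .refl

theorem quot_mk_linked_eq_iff : Quot.mk (Linked B) u = Quot.mk _ v ↔ Linked B u v :=
  ⟨fun h => (linked_equivalence B).eqvGen_iff.1 (Quot.eqvGen_exact h), Quot.sound⟩

end Linked

section Components

variable {B : Finset (Sym2 V)} {a u v w : V}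

theorem ncomp_eq_one_iff [Nonempty V] : ncomp B = 1 ↔ ∀ u v, Linked B u v := by
  rw [ncomp, Nat.card_eq_one_iff_unique]
  refine ⟨fun ⟨h, _⟩ u v => quot_mk_linked_eq_iff.1 (Subsingleton.elim _ _), fun h => ?_⟩
  exact ⟨⟨Quot.ind fun u => Quot.ind fun v => Quot.sound (h u v)⟩,
    ⟨Quot.mk _ (Classical.arbitrary V)⟩⟩

theorem ncomp_insert_of_linked [DecidableEq V] (h : Linked B u v) :
    ncomp (insert s(u, v) B) = ncomp B := by
  rw [ncomp, ncomp, linked_insert_of_linked h]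

/-- The map induced on components is onto and injective off the component of `u`. -/
theorem ncomp_insert_of_not_linked [Fintype V] [DecidableEq V] (h : ¬ Linked B u v) :
    ncomp B = ncomp (insert s(u, v) B) + 1 := by
  set B' := insert s(u, v) B
  let f : Quot (Linked B) → Quot (Linked B') :=
    Quot.map id fun _ _ => Linked.mono (subset_insert _ _)
  have hinj : Set.InjOn f (Set.univ \ {Quot.mk _ u}) := by
    rintro ⟨a⟩ ha ⟨w⟩ hw haw
    simp only [Set.mem_sdiff, Set.mem_singleton_iff, quot_mk_linked_eq_iff] at ha hw
    refine quot_mk_linked_eq_iff.2 ?_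
    replace haw : Quot.mk (Linked B') a = Quot.mk _ w := haw
    rcases linked_insert_iff.1 (quot_mk_linked_eq_iff.1 haw) with h' | ⟨h₁, -⟩ | ⟨-, h₂⟩
    exacts [h', absurd h₁ ha.2, absurd h₂.symm hw.2]
  have hsurj : f '' (Set.univ \ {Quot.mk _ u}) = Set.univ := by
    refine Set.eq_univ_of_forall fun r => Quot.ind (fun a => ?_) r
    by_cases ha : Linked B a u
    · refine ⟨Quot.mk _ v, ?_, Quot.sound ?_⟩
      · simpa [quot_mk_linked_eq_iff] using fun h' => h h'.symm
      · exact (linked_of_mem (mem_insert_self _ _)).symm.trans (ha.mono (subset_insert _ _)).symm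
    · exact ⟨Quot.mk _ a, by simpa [quot_mk_linked_eq_iff] using ha, rfl⟩
  rw [ncomp, ncomp, ← Set.ncard_univ, ← Set.ncard_univ, ← hsurj, hinj.ncard_image,
    Set.ncard_sdiff_singleton_add_one (Set.mem_univ _)]

theorem ncomp_empty [Fintype V] : ncomp (∅ : Finset (Sym2 V)) = Fintype.card V := by
  have : Function.Bijective (Quot.mk (Linked (∅ : Finset (Sym2 V)))) :=
    ⟨fun u v h => by simpa [linked_empty] using quot_mk_linked_eq_iff.1 h, Quot.mk_surjective⟩
  rw [ncomp, ← Nat.card_eq_of_bijective _ this, Nat.card_eq_fintype_card]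

theorem card_le_card_add_ncomp [Fintype V] [DecidableEq V] (B : Finset (Sym2 V)) :
    Fintype.card V ≤ B.card + ncomp B := by
  induction B using Finset.induction_on with
  | empty => rw [ncomp_empty, card_empty, zero_add]
  | insert e B he ih =>
    induction e using Sym2.ind with
    | _ u v =>
      rw [card_insert_of_notMem he]
      by_cases h : Linked B u v
      · rw [ncomp_insert_of_linked h]; omega
      · have := ncomp_insert_of_not_linked h; omega

theorem linked_of_ncomp_eq_two [Fintype V] (h : ncomp B = 2) (hu : ¬ Linked B a u)
    (hv : ¬ Linked B a v) : Linked B u v := by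
  by_contra huv
  have := Fintype.ofFinite (Quot (Linked B))
  have hcard : ({Quot.mk (Linked B) a, Quot.mk _ u, Quot.mk _ v} : Finset _).card = 3 := by
    rw [card_insert_of_notMem, card_pair] <;> simp [quot_mk_linked_eq_iff, *]
  have := card_le_univ ({Quot.mk (Linked B) a, Quot.mk _ u, Quot.mk _ v} : Finset _)
  rw [hcard, ← Nat.card_eq_fintype_card, ← ncomp, h] at this
  omega

end Components

theorem xor_mem_floating_iff [Fintype V] {B : Finset (Sym2 V)} {b x y : V} (hB : ncomp B = 2) :
    Xor (x ∈ floating b B) (y ∈ floating b B) ↔ ¬ Linked B x y := by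
  simp only [floating, mem_filter, mem_univ, true_and]
  constructor
  · rintro (⟨hx, hy⟩ | ⟨hy, hx⟩) hxy
    · exact hx ((not_not.1 hy).trans hxy.symm)
    · exact hy ((not_not.1 hx).trans hxy)
  · intro hxy
    by_cases hx : Linked B b x
    · exact .inr ⟨fun hy => hxy (hx.symm.trans hy), not_not.2 hx⟩
    · exact .inl ⟨hx, fun hy => hxy (linked_of_ncomp_eq_two hB hx hy)⟩

section Forests

variable [Fintype V] [DecidableEq V] {A B : Finset (Sym2 V)} {k : ℕ} {u v : V}

theorem IsSF.insert (hB : IsSF (k + 1) B) (h : ¬ Linked B u v) : IsSF k (insert s(u, v) B) := by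
  have hnm : s(u, v) ∉ B := fun hm => h (linked_of_mem hm)
  have := ncomp_insert_of_not_linked h
  obtain ⟨h₁, h₂⟩ := hB
  exact ⟨by omega, by rw [card_insert_of_notMem hnm]; omega⟩

theorem IsSF.not_linked_erase (hA : IsSF k A) (he : s(u, v) ∈ A) :
    ¬ Linked (A.erase s(u, v)) u v := by
  intro hl
  have h₁ := ncomp_insert_of_linked hl
  rw [insert_erase he] at h₁
  have h₂ := card_le_card_add_ncomp (A.erase s(u, v))
  have := card_erase_add_one he
  obtain ⟨h₃, h₄⟩ := hA
  omega

theorem IsSF.not_isDiag (hA : IsSF k A) {e : Sym2 V} (he : e ∈ A) : ¬ e.IsDiag := by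
  induction e using Sym2.ind with
  | _ u v =>
    rw [Sym2.mk_isDiag_iff]
    rintro rfl
    exact hA.not_linked_erase he .refl

theorem IsSF.erase (hA : IsSF k A) (he : s(u, v) ∈ A) : IsSF (k + 1) (A.erase s(u, v)) := by
  have h₁ := ncomp_insert_of_not_linked (hA.not_linked_erase he)
  rw [insert_erase he] at h₁
  have := card_erase_add_one he
  obtain ⟨h₃, h₄⟩ := hA
  exact ⟨by omega, by omega⟩

theorem sum_isSF_two_not_linked_eq (c : Sym2 V → ℝ) (x y : V) :
    ∑ B ∈ univ.filter (fun B => IsSF 2 B ∧ ¬ Linked B x y), wt c B =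
      ∑ A ∈ univ.filter (fun A => IsSF 1 A ∧ s(x, y) ∈ A), wt c (A.erase s(x, y)) := by
  have hnm {B : Finset (Sym2 V)} (h : ¬ Linked B x y) : s(x, y) ∉ B :=
    fun hm => h (linked_of_mem hm)
  refine sum_nbij' (insert s(x, y)) (fun A => A.erase s(x, y)) ?_ ?_ ?_ ?_ ?_ <;>
    simp only [mem_filter, mem_univ, true_and]
  · exact fun B ⟨hB, h⟩ => ⟨hB.insert h, mem_insert_self _ _⟩
  · exact fun A ⟨hA, he⟩ => ⟨hA.erase he, hA.not_linked_erase he⟩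
  · exact fun B ⟨_, h⟩ => erase_insert (hnm h)
  · exact fun A ⟨_, he⟩ => insert_erase he
  · exact fun B ⟨_, h⟩ => by rw [erase_insert (hnm h)]

/-- A maximal forest inside a connected edge set is a spanning tree. -/
theorem exists_isSF_one_subset [Nonempty V] {S : Finset (Sym2 V)} (hS : ncomp S = 1) :
    ∃ T ⊆ S, IsSF 1 T := by
  obtain ⟨T, hT, hmax⟩ := exists_max_image
    (S.powerset.filter fun T => T.card + ncomp T = Fintype.card V) card
    ⟨∅, by simp [ncomp_empty]⟩
  simp only [mem_filter, mem_powerset] at hT hmax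
  suffices ncomp T = 1 from ⟨T, hT.1, this, by omega⟩
  by_contra hT1
  obtain ⟨p, q, hpq, hn⟩ : ∃ p q, s(p, q) ∈ S ∧ ¬ Linked T p q := by
    by_contra! h
    refine hT1 (ncomp_eq_one_iff.2 fun u v => ?_)
    induction ncomp_eq_one_iff.1 hS u v with
    | refl => exact .refl
    | tail _ hab ih => exact ih.trans (h _ _ hab)
  have hnm : s(p, q) ∉ T := fun hm => hn (linked_of_mem hm)
  have := ncomp_insert_of_not_linked hn
  have := hmax (insert s(p, q) T) ⟨insert_subset hpq hT.1, by rw [card_insert_of_notMem hnm]; omega⟩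
  rw [card_insert_of_notMem hnm] at this
  omega

end Forests

section Laplacian

variable [DecidableEq V]

def dipole (x y : V) : V → ℝ := Pi.single x 1 - Pi.single y 1

theorem dipole_swap (x y : V) : dipole y x = -dipole x y := by
  rw [dipole, dipole, neg_sub]

/-- The signed incidence vector of an edge, oriented by the representative `Quot.out e`;
it vanishes on loops. -/
def incidence (e : Sym2 V) : V → ℝ := dipole (Quot.out e).1 (Quot.out e).2

theorem incidence_mk (x y : V) :
    incidence s(x, y) = dipole x y ∨ incidence s(x, y) = -dipole x y := by
  have h : s((Quot.out s(x, y)).1, (Quot.out s(x, y)).2) = s(x, y) := Quot.out_eq _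
  rcases Sym2.eq_iff.1 h with ⟨h₁, h₂⟩ | ⟨h₁, h₂⟩
  · exact .inl (by rw [incidence, h₁, h₂])
  · exact .inr (by rw [incidence, h₁, h₂, dipole_swap])

theorem incidence_mk_mul_incidence_mk (x y u v : V) :
    incidence s(x, y) u * incidence s(x, y) v = dipole x y u * dipole x y v := by
  rcases incidence_mk x y with h | h <;> simp [h]

theorem incidence_mul_self (e : Sym2 V) (u : V) :
    incidence e u * incidence e u = if u ∈ e ∧ ¬ e.IsDiag then 1 else 0 := by
  induction e using Sym2.ind with
  | _ x y =>
    rw [incidence_mk_mul_incidence_mk]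
    by_cases hxy : x = y
    · simp [dipole, hxy]
    · by_cases hux : u = x <;> by_cases huy : u = y <;> simp_all [dipole]

theorem incidence_mul_incidence_of_ne {e : Sym2 V} {u v : V} (huv : u ≠ v) (he : e ≠ s(u, v)) :
    incidence e u * incidence e v = 0 := by
  induction e using Sym2.ind with
  | _ x y =>
    rw [incidence_mk_mul_incidence_mk]
    by_cases hux : u = x <;> by_cases huy : u = y <;> by_cases hvx : v = x <;>
      by_cases hvy : v = y <;> simp_all [dipole, Sym2.eq_swap]

variable [Fintype V]

theorem lap_eq_sum (c : Sym2 V → ℝ) (u v : V) :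
    lap c u v = ∑ e, c e * (incidence e u * incidence e v) := by
  rcases eq_or_ne u v with rfl | huv
  · have himg : univ.filter (fun e : Sym2 V => u ∈ e ∧ ¬ e.IsDiag) =
        (univ.filter (· ≠ u)).image (fun w => s(u, w)) := by
      ext e
      induction e using Sym2.ind with
      | _ x y =>
        simp only [mem_filter, mem_univ, true_and, mem_image, Sym2.mem_iff, Sym2.mk_isDiag_iff]
        constructor
        · rintro ⟨rfl | rfl, hxy⟩
          exacts [⟨y, Ne.symm hxy, rfl⟩, ⟨x, hxy, Sym2.eq_swap⟩]
        · rintro ⟨w, hw, hwe⟩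
          rcases Sym2.eq_iff.1 hwe with ⟨rfl, rfl⟩ | ⟨rfl, rfl⟩
          exacts [⟨.inl rfl, Ne.symm hw⟩, ⟨.inr rfl, hw⟩]
    simp only [lap, if_true, incidence_mul_self, mul_ite, mul_one, mul_zero]
    rw [← sum_filter, himg, sum_image fun _ _ _ _ h => Sym2.congr_right.1 h]
  · rw [lap, if_neg huv, sum_eq_single s(u, v) (fun e _ he => by
        rw [incidence_mul_incidence_of_ne huv he, mul_zero]) (by simp),
      incidence_mk_mul_incidence_mk]
    simp [dipole, huv, huv.symm]

theorem lap_symm (c : Sym2 V → ℝ) (u v : V) : lap c u v = lap c v u := by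
  simp only [lap_eq_sum, mul_comm (incidence _ u)]

theorem lap_add_single (c : Sym2 V → ℝ) (e : Sym2 V) (u v : V) :
    lap (c + Pi.single e 1) u v = lap c u v + incidence e u * incidence e v := by
  simp [lap_eq_sum, add_mul, sum_add_distrib, Pi.single_apply]

end Laplacian

section CauchyBinet

open Matrix

variable {R : Type*} [CommRing R] {ι E : Type*} [Fintype ι] [DecidableEq ι] [Fintype E]

theorem det_of_sum_smul (g : ι → E → R) (v : E → ι → R) :
    det (of fun p => ∑ e, g p e • v e) =
      ∑ r : ι → E, (∏ p, g p (r p)) * det (of fun p => v (r p)) := by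
  have := (detRowAlternating : (ι → R) [⋀^ι]→ₗ[R] R).toMultilinearMap.map_sum
    fun p e => g p e • v e
  simp only [AlternatingMap.coe_multilinearMap, MultilinearMap.map_smul_univ] at this
  exact this

theorem sum_equiv_prod_mul_det {T : Type*} [Fintype T] [DecidableEq T] (f : ι → T → R)
    (σ₀ : ι ≃ T) :
    ∑ σ : ι ≃ T, (∏ p, f p (σ p)) * det (of fun p q => f q (σ p)) =
      det (of fun p q => f p (σ₀ q)) ^ 2 := by
  set A : Matrix ι ι R := of fun p q => f p (σ₀ q)
  have hterm (π : Equiv.Perm ι) :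
      (∏ p, f p (σ₀ (π p))) * det (of fun p q => f q (σ₀ (π p))) =
        det Aᵀ * (Equiv.Perm.sign π * ∏ p, Aᵀ (π p) p) := by
    rw [show (of fun p q => f q (σ₀ (π p))) = Aᵀ.submatrix π id from rfl, det_permute]
    simp only [A, transpose_apply, of_apply]
    ring
  rw [← Equiv.sum_comp (Equiv.equivCongr (Equiv.refl ι) σ₀)]
  simp only [Equiv.equivCongr_apply_apply, Equiv.refl_symm, Equiv.coe_refl, id_eq]
  rw [sum_congr rfl fun π _ => hterm π, ← mul_sum, ← det_apply', det_transpose, sq]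

theorem sum_filter_image_eq_sum_equiv [DecidableEq E] (g : (ι → E) → R) (S : Finset E)
    (hS : S.card = Fintype.card ι) :
    ∑ r ∈ univ.filter (fun r : ι → E => Function.Injective r ∧ univ.image r = S), g r =
      ∑ σ : ι ≃ S, g (fun p => σ p) := by
  refine (sum_bij (fun σ _ => fun p => (σ p : E)) ?_ ?_ ?_ fun _ _ => rfl).symm
  · intro σ _
    simp only [mem_filter, mem_univ, true_and]
    refine ⟨fun p p' h => σ.injective (Subtype.ext h), ?_⟩
    ext e
    simp only [mem_image, mem_univ, true_and]
    exact ⟨by rintro ⟨p, rfl⟩; exact (σ p).2, fun he => ⟨σ.symm ⟨e, he⟩, by simp⟩⟩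
  · exact fun σ _ σ' _ h => Equiv.ext fun p => Subtype.ext (congrFun h p)
  · intro r hr
    simp only [mem_filter, mem_univ, true_and] at hr
    obtain ⟨hinj, rfl⟩ := hr
    have hbij : Function.Bijective
        fun p => (⟨r p, mem_image_of_mem r (mem_univ p)⟩ : univ.image r) :=
      (Fintype.bijective_iff_injective_and_card _).2
        ⟨fun p p' h => hinj (congrArg Subtype.val h), by rw [Fintype.card_coe, hS]⟩
    exact ⟨Equiv.ofBijective _ hbij, mem_univ _, rfl⟩

/-- Cauchy–Binet for the Gram matrix `f diag(w) fᵀ`, with `F S` the contribution of the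
`|ι|`-subset `S`, which does not depend on the enumeration of `S`. -/
theorem det_gram_eq_sum_powersetCard [DecidableEq E] (w : E → R) (f : ι → E → R)
    (F : Finset E → R)
    (hF : ∀ S : Finset E, S.card = Fintype.card ι → ∀ σ : ι ≃ S,
      (∏ e ∈ S, w e) * det (of fun p q => f p (σ q)) ^ 2 = F S) :
    det (of fun p q => ∑ e, w e * (f p e * f q e)) =
      ∑ S ∈ univ.powersetCard (Fintype.card ι), F S := by
  have hrows : (of fun p q => ∑ e, w e * (f p e * f q e)) =
      of fun p => ∑ e, (w e * f p e) • fun q => f q e := by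
    ext p q
    simp [mul_assoc]
  have hnoninj : ∑ r ∈ univ.filter (fun r : ι → E => ¬ Function.Injective r),
      (∏ p, w (r p) * f p (r p)) * det (of fun p q => f q (r p)) = 0 := by
    refine sum_eq_zero fun r hr => ?_
    obtain ⟨p, p', hpp', hne⟩ := Function.not_injective_iff.1 (mem_filter.1 hr).2
    rw [det_zero_of_row_eq hne (by ext q; simp [hpp']), mul_zero]
  have hmaps : ∀ r ∈ univ.filter (fun r : ι → E => Function.Injective r),
      univ.image r ∈ univ.powersetCard (Fintype.card ι) := fun r hr =>
    mem_powersetCard.2 ⟨subset_univ _, by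
      rw [card_image_of_injective _ (mem_filter.1 hr).2, card_univ]⟩
  rw [hrows, det_of_sum_smul, ← sum_filter_add_sum_filter_not univ Function.Injective, hnoninj,
    add_zero, ← sum_fiberwise_of_maps_to hmaps]
  refine sum_congr rfl fun S hS => ?_
  have hcard := (mem_powersetCard.1 hS).2
  rw [filter_filter, sum_filter_image_eq_sum_equiv _ S hcard]
  let σ₀ : ι ≃ S := Fintype.equivOfCardEq (by rw [Fintype.card_coe, hcard])
  rw [← hF S hcard σ₀, ← sum_equiv_prod_mul_det (fun p (s : S) => f p s) σ₀, mul_sum]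
  refine sum_congr rfl fun σ _ => ?_
  rw [prod_mul_distrib, ← prod_coe_sort S w, Equiv.prod_comp σ (fun s : S => w s), mul_assoc]

end CauchyBinet

section TreeDeterminant

open Matrix

theorem sq_det_eq_of_forall_ne_eq_zero {R : Type*} [CommRing R] {n : ℕ}
    (A : Matrix (Fin (n + 1)) (Fin (n + 1)) R) (i j : Fin (n + 1)) (h : ∀ k ≠ j, A i k = 0) :
    A.det ^ 2 = A i j ^ 2 * (A.submatrix i.succAbove j.succAbove).det ^ 2 := by
  rw [det_succ_row A i, sum_eq_single j (fun k _ hk => by rw [h k hk, mul_zero, zero_mul])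
    (by simp), mul_pow, mul_pow, ← pow_mul, mul_comm _ 2, pow_mul, neg_one_sq, one_pow, one_mul]

theorem exists_equiv_erase {α : Type*} [DecidableEq α] {s : Finset α} {m : ℕ}
    (ρ : Fin (m + 1) ≃ s) {i : Fin (m + 1)} {a : α} (hi : (ρ i : α) = a) :
    ∃ ρ' : Fin m ≃ s.erase a, ∀ p, (ρ' p : α) = ρ (i.succAbove p) := by
  subst hi
  have hmem (p : Fin m) : (ρ (i.succAbove p) : α) ∈ s.erase (ρ i) :=
    mem_erase.2 ⟨fun h => i.succAbove_ne p (ρ.injective (Subtype.ext h)), (ρ _).2⟩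
  have hs : s.card = m + 1 := by rw [← Fintype.card_coe, ← Fintype.card_congr ρ, Fintype.card_fin]
  have hbij : Function.Bijective fun p => (⟨_, hmem p⟩ : s.erase (ρ i)) :=
    (Fintype.bijective_iff_injective_and_card _).2
      ⟨fun p p' h => by simpa using h,
        by rw [Fintype.card_fin, Fintype.card_coe, card_erase_of_mem (ρ i).2, hs,
          Nat.add_sub_cancel]⟩
  exact ⟨Equiv.ofBijective _ hbij, fun _ => rfl⟩

variable [DecidableEq V]

theorem incidence_eq_zero_of_notMem {e : Sym2 V} {u : V} (hu : u ∉ e) : incidence e u = 0 := by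
  have := incidence_mul_self e u
  rwa [if_neg (fun h => hu h.1), mul_self_eq_zero] at this

theorem filter_mem_nonempty_of_linked {S : Finset (Sym2 V)} {u v : V} (h : Linked S u v)
    (huv : u ≠ v) : (S.filter (v ∈ ·)).Nonempty := by
  rcases h.cases_tail with rfl | ⟨w, -, hw⟩
  · exact absurd rfl huv
  · exact ⟨_, mem_filter.2 ⟨hw, Sym2.mem_mk_right w v⟩⟩

theorem sum_card_filter_mem {W : Finset V} {S : Finset (Sym2 V)} (hloop : ∀ e ∈ S, ¬ e.IsDiag)
    (hSW : ∀ e ∈ S, ∀ v ∈ e, v ∈ W) : ∑ v ∈ W, (S.filter (v ∈ ·)).card = 2 * S.card := by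
  have := sum_card_bipartiteAbove_eq_sum_card_bipartiteBelow (s := W) (t := S) (r := (· ∈ ·))
  simp only [bipartiteAbove, bipartiteBelow] at this
  rw [this, mul_comm, ← smul_eq_mul, ← sum_const]
  refine sum_congr rfl fun e he => ?_
  induction e using Sym2.ind with
  | _ x y =>
    have hxy : x ≠ y := fun h => hloop _ he (Sym2.mk_isDiag_iff.2 h)
    rw [show W.filter (· ∈ s(x, y)) = {x, y} by
      ext v
      simp only [mem_filter, mem_insert, mem_singleton, Sym2.mem_iff]
      exact ⟨And.right, fun h => ⟨hSW _ he v (Sym2.mem_iff.2 h), h⟩⟩, card_pair hxy]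

/-- `S` is a loopless edge set on `insert b W` linking every vertex of `W` to `b`; together with
`S.card = W.card` this says that `S` is a spanning tree of `insert b W`. -/
structure SpansFrom (b : V) (W : Finset V) (S : Finset (Sym2 V)) : Prop where
  root_notMem : b ∉ W
  not_isDiag : ∀ e ∈ S, ¬ e.IsDiag
  mem_insert_root : ∀ e ∈ S, ∀ v ∈ e, v ∈ insert b W
  linked : ∀ v ∈ W, Linked S b v

variable {b : V} {W : Finset V} {S : Finset (Sym2 V)}

/-- Handshake lemma: otherwise the degrees on `insert b W` would sum to more than `2|S|`. -/
theorem SpansFrom.exists_leaf (hT : SpansFrom b W S) (hW : W.Nonempty) (hcard : S.card = W.card) :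
    ∃ ℓ ∈ W, (S.filter (ℓ ∈ ·)).card = 1 := by
  by_contra! h
  have hdeg : ∀ v ∈ W, 2 ≤ (S.filter (v ∈ ·)).card := fun v hv =>
    lt_of_le_of_ne (card_pos.2 (filter_mem_nonempty_of_linked (hT.linked v hv)
      (ne_of_mem_of_not_mem hv hT.root_notMem).symm)) (h v hv).symm
  obtain ⟨v, hv⟩ := hW
  have hdegb := card_pos.2 (filter_mem_nonempty_of_linked (hT.linked v hv).symm
    (ne_of_mem_of_not_mem hv hT.root_notMem))
  have := sum_card_filter_mem hT.not_isDiag hT.mem_insert_root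
  rw [sum_insert hT.root_notMem] at this
  have := card_nsmul_le_sum W _ 2 hdeg
  rw [smul_eq_mul] at this
  omega

theorem linked_erase_of_leaf {ℓ m : V} (hbℓ : b ≠ ℓ) (hmℓ : m ≠ ℓ)
    (huniq : ∀ e ∈ S, ℓ ∈ e → e = s(ℓ, m)) {v : V} (h : Linked S b v) (hv : v ≠ ℓ) :
    Linked (S.erase s(ℓ, m)) b v := by
  -- a path may enter the leaf `ℓ` only from `m`, so `m` can stand in for `ℓ`
  suffices Linked (S.erase s(ℓ, m)) b (if v = ℓ then m else v) by rwa [if_neg hv] at this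
  clear hv
  induction h with
  | refl => rw [if_neg hbℓ]; exact .refl
  | @tail v w _ hvw ih =>
    by_cases he : s(v, w) = s(ℓ, m)
    · rcases Sym2.eq_iff.1 he with ⟨rfl, rfl⟩ | ⟨rfl, rfl⟩ <;> simpa [hmℓ] using ih
    · have hvℓ : v ≠ ℓ := by rintro rfl; exact he (huniq _ hvw (Sym2.mem_mk_left _ _))
      have hwℓ : w ≠ ℓ := by rintro rfl; exact he (huniq _ hvw (Sym2.mem_mk_right _ _))
      rw [if_neg hvℓ] at ih
      rw [if_neg hwℓ]
      exact ih.tail (mem_erase.2 ⟨he, hvw⟩)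

theorem SpansFrom.erase_leaf (hT : SpansFrom b W S) {ℓ m : V} (hℓ : ℓ ∈ W) (hm : s(ℓ, m) ∈ S)
    (huniq : ∀ e ∈ S, ℓ ∈ e → e = s(ℓ, m)) : SpansFrom b (W.erase ℓ) (S.erase s(ℓ, m)) where
  root_notMem h := hT.root_notMem (mem_of_mem_erase h)
  not_isDiag e he := hT.not_isDiag e (mem_of_mem_erase he)
  mem_insert_root e he v hv := by
    rcases mem_insert.1 (hT.mem_insert_root e (mem_of_mem_erase he) v hv) with rfl | hvW
    · exact mem_insert_self _ _
    · refine mem_insert_of_mem (mem_erase.2 ⟨?_, hvW⟩)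
      rintro rfl
      exact (mem_erase.1 he).1 (huniq e (mem_of_mem_erase he) hv)
  linked v hv := by
    refine linked_erase_of_leaf (by rintro rfl; exact hT.root_notMem hℓ) ?_ huniq
      (hT.linked v (mem_of_mem_erase hv)) (mem_erase.1 hv).1
    exact fun h => hT.not_isDiag _ hm (Sym2.mk_isDiag_iff.2 h.symm)

/-- Expand along the row of a leaf, which has a single nonzero entry, and remove the leaf. -/
theorem SpansFrom.sq_det_incidence_fin {m : ℕ} (hT : SpansFrom b W S) (ρ : Fin m ≃ W)
    (γ : Fin m ≃ S) : det (of fun p q => incidence (γ q : Sym2 V) (ρ p)) ^ 2 = 1 := by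
  induction m generalizing W S with
  | zero => simp
  | succ m ih =>
    have hcard : S.card = W.card := by
      rw [← Fintype.card_coe S, ← Fintype.card_coe W, ← Fintype.card_congr ρ,
        Fintype.card_congr γ]
    obtain ⟨ℓ, hℓW, hdeg⟩ := hT.exists_leaf ⟨_, (ρ 0).2⟩ hcard
    obtain ⟨e₀, he₀⟩ := card_eq_one.1 hdeg
    have huniq : ∀ e ∈ S, ℓ ∈ e → e = e₀ := fun e he hℓ =>
      mem_singleton.1 (he₀ ▸ mem_filter.2 ⟨he, hℓ⟩)
    obtain ⟨he₀S, hℓe₀⟩ := mem_filter.1 (he₀ ▸ mem_singleton_self e₀)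
    obtain ⟨m', rfl⟩ := Sym2.mem_iff_exists.1 hℓe₀
    set i := ρ.symm ⟨ℓ, hℓW⟩
    set j := γ.symm ⟨s(ℓ, m'), he₀S⟩
    obtain ⟨ρ', hρ'⟩ := exists_equiv_erase ρ (i := i) (a := ℓ) (by simp [i])
    obtain ⟨γ', hγ'⟩ := exists_equiv_erase γ (i := j) (a := s(ℓ, m')) (by simp [j])
    have hrow : ∀ k ≠ j, incidence (γ k : Sym2 V) (ρ i) = 0 := fun k hk => by
      refine incidence_eq_zero_of_notMem fun hℓ => hk ?_
      rw [Equiv.eq_symm_apply]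
      exact Subtype.ext (huniq _ (γ k).2 (by simpa [i] using hℓ))
    rw [sq_det_eq_of_forall_ne_eq_zero _ i j hrow, ← ih (hT.erase_leaf hℓW he₀S huniq) ρ' γ',
      of_apply, sq, incidence_mul_self,
      if_pos ⟨by simp [i, j], by simpa [j] using hT.not_isDiag _ he₀S⟩, one_mul]
    congr 2
    ext p q
    simp [hρ', hγ']

theorem SpansFrom.sq_det_incidence {ι : Type*} [Fintype ι] [DecidableEq ι]
    (hT : SpansFrom b W S) (ρ : ι ≃ W) (γ : ι ≃ S) :
    det (of fun p q => incidence (γ q : Sym2 V) (ρ p)) ^ 2 = 1 := by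
  rw [← det_submatrix_equiv_self (Fintype.equivFin ι).symm]
  exact hT.sq_det_incidence_fin ((Fintype.equivFin ι).symm.trans ρ)
    ((Fintype.equivFin ι).symm.trans γ)

end TreeDeterminant

section MatrixTree

open Matrix

variable [Fintype V] [DecidableEq V]

theorem sum_subtype_ne_eq_sum {M : Type*} [AddCommMonoid M] {b : V} (f : V → M) (hf : f b = 0) :
    ∑ p : {w // w ≠ b}, f p = ∑ u, f u := by
  rw [← sum_subtype (univ.erase b) (by simp) f, sum_erase _ hf]

theorem sum_mul_dipole (f : V → ℝ) (x y : V) : ∑ u, f u * dipole x y u = f x - f y := by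
  simp [dipole, mul_sub, sum_sub_distrib, Pi.single_apply]

theorem det_incidence_eq_zero_of_not_linked {b v : V} {S : Finset (Sym2 V)} (hv : ¬ Linked S b v)
    (γ : {w // w ≠ b} ≃ S) : det (of fun p q => incidence (γ q : Sym2 V) p) = 0 := by
  set f : V → ℝ := fun u => if Linked S v u then 1 else 0
  have hcol : ∀ e ∈ S, ∑ u, f u * incidence e u = 0 := by
    intro e he
    induction e using Sym2.ind with
    | _ x y =>
      have hxy : f x = f y := by
        simp only [f, show Linked S v x ↔ Linked S v y from
          ⟨fun h => h.trans (linked_of_mem he), fun h => h.trans (linked_of_mem he).symm⟩]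
      rcases incidence_mk x y with h | h <;> simp [h, mul_neg, sum_mul_dipole, hxy]
  have hvb : v ≠ b := by rintro rfl; exact hv .refl
  rw [← exists_vecMul_eq_zero_iff]
  refine ⟨fun p => f p, fun h => (by simpa [f] using congrFun h ⟨v, hvb⟩ : ¬ Linked S v v) .refl,
    funext fun q => ?_⟩
  rw [vecMul, dotProduct, Pi.zero_apply, ← hcol _ (γ q).2]
  exact sum_subtype_ne_eq_sum (fun u => f u * incidence (γ q) u)
    (by simp [f, show ¬ Linked S v b from fun h => hv h.symm])

theorem sq_det_incidence_eq_ite {b : V} {S : Finset (Sym2 V)} (hS : S.card + 1 = Fintype.card V)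
    (γ : {w // w ≠ b} ≃ S) :
    det (of fun p q => incidence (γ q : Sym2 V) p) ^ 2 = if IsSF 1 S then 1 else 0 := by
  have : Nonempty V := ⟨b⟩
  split_ifs with hT
  · exact SpansFrom.sq_det_incidence (W := univ.erase b)
      ⟨notMem_erase b univ, fun e he => hT.not_isDiag he, fun _ _ v _ => by simp,
        fun v _ => ncomp_eq_one_iff.1 hT.1 b v⟩ (Equiv.subtypeEquivRight (by simp)) γ
  · obtain ⟨v, hv⟩ : ∃ v, ¬ Linked S b v := by
      by_contra! h
      exact hT ⟨ncomp_eq_one_iff.2 fun u v => (h u).symm.trans (h v), hS⟩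
    rw [det_incidence_eq_zero_of_not_linked hv γ, sq, mul_zero]

theorem det_dlap (c : Sym2 V → ℝ) (b : V) : (dlap c b).det = kappa1 c := by
  have hcard : Fintype.card {w // w ≠ b} + 1 = Fintype.card V := by
    rw [Fintype.card_subtype_compl, Fintype.card_subtype_eq]
    have := Fintype.card_pos_iff.2 ⟨b⟩
    omega
  have hdlap :
      dlap c b = of fun p q : {w // w ≠ b} => ∑ e, c e * (incidence e p * incidence e q) := by
    ext p q
    exact lap_eq_sum c p q
  have hF (S : Finset (Sym2 V)) (hS : S.card = Fintype.card {w // w ≠ b}) (σ : {w // w ≠ b} ≃ S) :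
      (∏ e ∈ S, c e) * det (of fun p q => incidence (σ q : Sym2 V) p) ^ 2 =
        if IsSF 1 S then wt c S else 0 := by
    rw [sq_det_incidence_eq_ite (by omega) σ, wt]
    split_ifs <;> simp
  rw [hdlap, det_gram_eq_sum_powersetCard c (fun (p : {w // w ≠ b}) e => incidence e p) _ hF,
    sum_ite, sum_const_zero, add_zero, kappa1]
  congr 1
  ext A
  simp only [mem_filter, mem_powersetCard, mem_univ, subset_univ, true_and]
  exact ⟨And.right, fun h => ⟨by have := h.2; omega, h⟩⟩

end MatrixTree

section RankOneUpdate

open Matrix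

variable [Fintype V] [DecidableEq V]

theorem green_of_ne (c : Sym2 V → ℝ) (b : V) (p q : {w // w ≠ b}) :
    green c b p q = (dlap c b)⁻¹ p q := by
  simp [green, p.2, q.2]

theorem green_symm (c : Sym2 V → ℝ) (b u v : V) : green c b u v = green c b v u := by
  have hsymm : (dlap c b).IsSymm := by
    ext p q
    exact lap_symm c q p
  unfold green
  split_ifs <;> first | rfl | exact hsymm.inv.apply _ _

theorem dipole_dotProduct_inv_mulVec_dipole (c : Sym2 V → ℝ) (b x y : V) :
    (fun p : {w // w ≠ b} => dipole x y p) ⬝ᵥ ((dlap c b)⁻¹ *ᵥ fun p => dipole x y p) =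
      green c b x x - 2 * green c b x y + green c b y y := by
  have hrow (u : V) :
      ∑ q : {w // w ≠ b}, green c b u q * dipole x y q = green c b u x - green c b u y := by
    rw [sum_subtype_ne_eq_sum (fun v => green c b u v * dipole x y v) (by simp [green]),
      sum_mul_dipole]
  simp only [dotProduct, mulVec, ← green_of_ne, hrow]
  rw [sum_subtype_ne_eq_sum (fun u => dipole x y u * (green c b u x - green c b u y))
    (by simp [green])]
  simp only [mul_comm (dipole x y _), sum_mul_dipole, green_symm c b y x]
  ring

theorem dlap_add_single (c : Sym2 V → ℝ) (b x y : V) :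
    dlap (c + Pi.single s(x, y) 1) b = dlap c b +
      replicateCol Unit (fun p : {w // w ≠ b} => dipole x y p) *
        replicateRow Unit (fun p : {w // w ≠ b} => dipole x y p) := by
  ext p q
  simp [dlap, lap_add_single, incidence_mk_mul_incidence_mk, mul_apply]

theorem kappa1_add_single (c : Sym2 V → ℝ) (e : Sym2 V) :
    kappa1 (c + Pi.single e 1) =
      kappa1 c + ∑ A ∈ univ.filter (fun A => IsSF 1 A ∧ e ∈ A), wt c (A.erase e) := by
  have hwt (A : Finset (Sym2 V)) :
      wt (c + Pi.single e 1) A = wt c A + if e ∈ A then wt c (A.erase e) else 0 := by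
    split_ifs with he
    · rw [wt, wt, wt, ← mul_prod_erase A _ he, ← mul_prod_erase A c he,
        prod_congr rfl (g := c) fun e' he' => by simp [ne_of_mem_erase he']]
      simp [add_mul]
    · rw [wt, wt, add_zero]
      exact prod_congr rfl fun e' he' => by simp [ne_of_mem_of_not_mem he' he]
  simp only [kappa1, hwt, sum_add_distrib, ← sum_filter, filter_filter]

theorem kappa1_pos [Nonempty V] {c : Sym2 V → ℝ} (hc : ∀ e, 0 ≤ c e)
    (hconn : ncomp (univ.filter fun e : Sym2 V => c e ≠ 0) = 1) : 0 < kappa1 c := by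
  obtain ⟨T, hTS, hT⟩ := exists_isSF_one_subset hconn
  exact sum_pos' (fun A _ => prod_nonneg fun e _ => hc e) ⟨T, mem_filter.2 ⟨mem_univ _, hT⟩,
    prod_pos fun e he => (hc e).lt_of_ne (Ne.symm (mem_filter.1 (hTS he)).2)⟩

/-- Raising the conductance of `xy` by `1` adds the left side to `κ`; by the matrix-tree theorem
and the matrix determinant lemma it multiplies `κ` by `1 + G_xx - 2 G_xy + G_yy`. -/
theorem sum_isSF_one_mem_wt_erase_eq {c : Sym2 V → ℝ} (hc : ∀ e, 0 ≤ c e)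
    (hconn : ncomp (univ.filter fun e : Sym2 V => c e ≠ 0) = 1) (b x y : V) :
    ∑ A ∈ univ.filter (fun A => IsSF 1 A ∧ s(x, y) ∈ A), wt c (A.erase s(x, y)) =
      kappa1 c * (green c b x x - 2 * green c b x y + green c b y y) := by
  have : Nonempty V := ⟨b⟩
  have hκ : IsUnit (dlap c b).det := by
    rw [det_dlap]
    exact (kappa1_pos hc hconn).ne'.isUnit
  have h := det_dlap (c + Pi.single s(x, y) 1) b
  rw [kappa1_add_single, dlap_add_single, det_add_replicateCol_mul_replicateRow hκ, det_dlap,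
    det_unique, Matrix.add_apply, one_apply_eq, Matrix.mul_assoc, ← replicateCol_mulVec,
    replicateRow_mul_replicateCol_apply, dipole_dotProduct_inv_mulVec_dipole] at h
  linear_combination -h

end RankOneUpdate

end TwoSF

open TwoSF

theorem statement_6_general {V : Type*} [Fintype V] [DecidableEq V] (c : Sym2 V → ℝ)
    (hc : ∀ e, 0 ≤ c e)
    (hconn : ncomp (Finset.univ.filter fun e : Sym2 V => c e ≠ 0) = 1)
    (b x y : V) (he : c s(x, y) ≠ 0) :
    pr2 c (fun B => Xor' (x ∈ floating b B) (y ∈ floating b B)) =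
      kappa1 c * (c s(x, y) * (green c b x x - 2 * green c b x y + green c b y y)) /
        (c s(x, y) * kappa2 c) := by
  rw [pr2, mul_left_comm, mul_div_mul_left _ _ he, ← sum_isSF_one_mem_wt_erase_eq hc hconn b,
    ← sum_isSF_two_not_linked_eq]
  congr 2
  exact Finset.filter_congr fun B _ => and_congr_right fun hB => xor_mem_floating_iff hB.1

/-- For a finite connected undirected graph with positive
conductances and marked vertex `b`, and an edge `e = {x, y}` (i.e.
`c s(x,y) ≠ 0`), the probability that `e` has exactly one endpoint in the
floating component `Σ` of a weight-proportional random two-component spanning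
forest equals `κ · T(e,e) / (c(e) · κ₂)`, where
`T(e,e) = c(e) · (G_{x,x} - 2 G_{x,y} + G_{y,y})` is the transfer current. -/
theorem statement_6 {V : Type*} [Fintype V] [DecidableEq V] (c : Sym2 V → ℝ)
    (hc : ∀ e, 0 ≤ c e) (hloop : ∀ v : V, c s(v, v) = 0)
    (hconn : ncomp (Finset.univ.filter fun e : Sym2 V => c e ≠ 0) = 1)
    (b x y : V) (he : c s(x, y) ≠ 0) :
    pr2 c (fun B => Xor' (x ∈ floating b B) (y ∈ floating b B)) =
      kappa1 c * (c s(x, y) * (green c b x x - 2 * green c b x y + green c b y y)) /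
        (c s(x, y) * kappa2 c) :=
  statement_6_general c hc hconn b x y he
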